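/- arXiv:q-alg/9503019 — 7 statements merged into one kernel-verified Lean document; each statement's English description precedes it below -/
import Mathlib

section
/- Let q : ℝ → ℝ be a smooth function satisfying q(t²) = 2t²·q(t) for all real t. Then q is identically zero. -/
open Real Filter Set

/-- A smooth function `q : ℝ → ℝ` satisfying `q (t^2) = 2 * t^2 * q t`
for all real `t` is identically zero. -/
theorem smooth_solution_of_functional_equation_is_zero
    (q : ℝ → ℝ) (hq : ContDiff ℝ (⊤ : ℕ∞) q)
    (hfe : ∀ t : ℝ, q (t ^ 2) = 2 * t ^ 2 * q t) :
    ∀ t : ℝ, q t = 0 := by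
  have hdq : Differentiable ℝ q := hq.differentiable (by simp)
  set h : ℝ → ℝ := fun x => q (Real.exp x) * Real.exp (-2 * x) with hh
  have hq1 : q 1 = 0 := by have := hfe 1; simp at this; linarith
  have h0' : h 0 = 0 := by simp [hh, hq1]
  have hdh : DifferentiableAt ℝ h 0 := by
    apply DifferentiableAt.mul
    · exact (hdq (Real.exp 0)).comp 0 (Real.differentiable_exp 0)
    · exact (Real.differentiable_exp.comp (differentiable_id.const_mul (-2))) 0
  set c : ℝ := deriv h 0 with hc
  -- key doubling identity
  have hdouble : ∀ x : ℝ, h (2 * x) = 2 * h x := by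
    intro x
    have he : Real.exp (2 * x) = (Real.exp x) ^ 2 := by
      rw [sq, ← Real.exp_add]; ring_nf
    simp only [hh]
    rw [he, hfe (Real.exp x)]
    have h3 : Real.exp (-2 * (2 * x)) = Real.exp (-2 * x) * ((Real.exp x) ^ 2)⁻¹ := by
      rw [sq, ← Real.exp_add, ← Real.exp_neg, ← Real.exp_add]; ring_nf
    rw [h3]
    have h4 : (Real.exp x) ^ 2 ≠ 0 := pow_ne_zero _ (Real.exp_ne_zero x)
    field_simp
  -- h x = 2^n * h (x / 2^n)
  have hiter : ∀ (x : ℝ) (n : ℕ), h x = 2 ^ n * h (x / 2 ^ n) := by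
    intro x n
    induction n with
    | zero => simp
    | succ n ih =>
      rw [ih]
      have hd := hdouble (x / 2 ^ (n + 1))
      have h2 : 2 * (x / 2 ^ (n + 1)) = x / 2 ^ n := by ring
      rw [h2] at hd
      rw [hd]; ring
  -- linearity: h x = c * x
  have hlin : ∀ x : ℝ, h x = c * x := by
    intro x
    rcases eq_or_ne x 0 with rfl | hx
    · simpa using h0'
    have hslope : Tendsto (slope h 0) (nhdsWithin 0 {(0:ℝ)}ᶜ) (nhds c) :=
      hasDerivAt_iff_tendsto_slope.mp hdh.hasDerivAt
    have hseq : Tendsto (fun n : ℕ => x / 2 ^ n) atTop (nhdsWithin 0 {(0:ℝ)}ᶜ) := by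
      apply tendsto_nhdsWithin_of_tendsto_nhds_of_eventually_within
      · have h5 : Tendsto (fun n : ℕ => ((1:ℝ)/2) ^ n) atTop (nhds 0) :=
          tendsto_pow_atTop_nhds_zero_of_lt_one (by norm_num) (by norm_num)
        have h6 := h5.const_mul x
        simp only [mul_zero] at h6
        convert h6 using 2 with n
        rw [div_pow]; ring
      · filter_upwards with n
        simp only [mem_compl_iff, mem_singleton_iff]
        exact div_ne_zero hx (by positivity)
    have hcomp : Tendsto (fun n : ℕ => slope h 0 (x / 2 ^ n)) atTop (nhds c) :=
      hslope.comp hseq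
    have hmul : Tendsto (fun n : ℕ => x * slope h 0 (x / 2 ^ n)) atTop (nhds (x * c)) :=
      hcomp.const_mul x
    have heq : ∀ n : ℕ, x * slope h 0 (x / 2 ^ n) = h x := by
      intro n
      rw [slope_def_field, h0']
      rw [hiter x n]
      have h7 : (x / 2 ^ n) ≠ 0 := div_ne_zero hx (by positivity)
      field_simp
      ring_nf
      field_simp
    have hconst : Tendsto (fun _ : ℕ => h x) atTop (nhds (x * c)) := by
      simpa only [heq] using hmul
    have := tendsto_nhds_unique hconst tendsto_const_nhds
    linarith [this]
  -- explicit formula for q on (0, ∞)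
  have hform : ∀ t : ℝ, 0 < t → q t = c * Real.log t * t ^ 2 := by
    intro t ht
    have hl := hlin (Real.log t)
    simp only [hh] at hl
    rw [Real.exp_log ht] at hl
    have he : Real.exp (-2 * Real.log t) = (t ^ 2)⁻¹ := by
      have e1 : (-2 : ℝ) * Real.log t = -(Real.log t + Real.log t) := by ring
      rw [e1, Real.exp_neg, Real.exp_add, Real.exp_log ht, sq]
    rw [he] at hl
    have h2 : (t : ℝ) ^ 2 ≠ 0 := by positivity
    field_simp at hl
    linarith [hl]
  -- first derivative on (0, ∞)
  have hd1 : ∀ t : ℝ, 0 < t → deriv q t = c * (2 * (Real.log t * t) + t) := by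
    intro t ht
    have hev : q =ᶠ[nhds t] (fun s => c * Real.log s * s ^ 2) := by
      filter_upwards [isOpen_Ioi.mem_nhds (show t ∈ Ioi (0:ℝ) from ht)] with s hs
      exact hform s hs
    rw [hev.deriv_eq]
    have hda : HasDerivAt (fun s : ℝ => c * Real.log s * s ^ 2)
        (c * t⁻¹ * t ^ 2 + c * Real.log t * (↑2 * t ^ 1)) t :=
      ((Real.hasDerivAt_log ht.ne').const_mul c).mul (hasDerivAt_pow 2 t)
    rw [hda.deriv]
    have ht' : t ≠ 0 := ht.ne'
    field_simp
    ring
  -- second derivative on (0, ∞)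
  have hd2 : ∀ t : ℝ, 0 < t → deriv (deriv q) t = c * (2 * Real.log t + 3) := by
    intro t ht
    have hev : deriv q =ᶠ[nhds t] (fun s => c * (2 * (Real.log s * s) + s)) := by
      filter_upwards [isOpen_Ioi.mem_nhds (show t ∈ Ioi (0:ℝ) from ht)] with s hs
      exact hd1 s hs
    rw [hev.deriv_eq]
    have l1 : HasDerivAt (fun s : ℝ => Real.log s * s) (t⁻¹ * t + Real.log t * 1) t :=
      (Real.hasDerivAt_log ht.ne').mul (hasDerivAt_id t)
    have l2 : HasDerivAt (fun s : ℝ => 2 * (Real.log s * s) + s)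
        (2 * (t⁻¹ * t + Real.log t * 1) + 1) t := (l1.const_mul 2).add (hasDerivAt_id t)
    have l3 : HasDerivAt (fun s : ℝ => c * (2 * (Real.log s * s) + s))
        (c * (2 * (t⁻¹ * t + Real.log t * 1) + 1)) t := l2.const_mul c
    rw [l3.deriv, inv_mul_cancel₀ ht.ne']
    ring
  -- continuity of the second derivative at 0 forces c = 0
  have hc0 : c = 0 := by
    by_contra hcne
    have hcont : Continuous (deriv (deriv q)) := by
      have h0 : ContDiff ℝ (↑(⊤:ℕ∞)) q := hq.of_le (by simp)
      have h1 : ContDiff ℝ (↑(⊤:ℕ∞)) (deriv q) := (contDiff_infty_iff_deriv.mp h0).2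
      exact ((contDiff_infty_iff_deriv.mp h1).2).continuous
    have htend : Tendsto (deriv (deriv q)) (nhdsWithin 0 (Ioi 0))
        (nhds (deriv (deriv q) 0)) :=
      (hcont.continuousAt).continuousWithinAt.tendsto
    have htend2 : Tendsto (fun t => c * (2 * Real.log t + 3)) (nhdsWithin 0 (Ioi 0))
        (nhds (deriv (deriv q) 0)) := by
      apply htend.congr'
      filter_upwards [self_mem_nhdsWithin] with t ht
      exact hd2 t ht
    have hlog : Tendsto (fun t => Real.log t) (nhdsWithin 0 (Ioi 0))
        (nhds ((deriv (deriv q) 0 / c - 3) / 2)) := by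
      have h1 := htend2.div_const c
      have h2 : Tendsto (fun t => (c * (2 * Real.log t + 3)) / c - 3)
          (nhdsWithin 0 (Ioi 0)) (nhds (deriv (deriv q) 0 / c - 3)) := h1.sub_const 3
      have h3 := h2.div_const 2
      apply h3.congr
      intro t
      field_simp
      ring
    exact not_tendsto_nhds_of_tendsto_atBot Real.tendsto_log_nhdsGT_zero _ hlog
  -- conclude
  have hqpos : ∀ t : ℝ, 0 < t → q t = 0 := by
    intro t ht
    rw [hform t ht, hc0]; ring
  intro t
  rcases lt_trichotomy t 0 with ht | rfl | ht
  · have hx : t ≠ 0 := ht.ne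
    have h2 : q (t ^ 2) = 0 := hqpos _ (pow_two_pos_of_ne_zero hx)
    have h5 := hfe t
    rw [h2] at h5
    have h6 : 2 * t ^ 2 * q t = 0 := h5.symm
    have h3 : (2 : ℝ) * t ^ 2 ≠ 0 := by
      have := pow_two_pos_of_ne_zero hx
      positivity
    exact (mul_eq_zero.mp h6).resolve_left h3
  · have := hfe 0; simpa using this
  · exact hqpos t ht
end

section
/- Let A be a finite-dimensional associative algebra with unit u over ℝ, and let π : A → A ⊗ A (equivalently a family of smooth functions π^{ij} on A) be a smooth Poisson tensor compatible with multiplication, i.e. π^{ij}(y·z) = a^i_{pq} a^j_{st} (z^q z^t π^{ps}(y) + y^p y^s π^{qt}(z)) for all y, z ∈ A, where a^k_{ij} are the structure constants. Then π(t·y) = t²·π(y) for all t ∈ ℝ and y ∈ A; in particular π(u) = 0 and each π^{ij} is a homogeneous quadratic form. -/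
open Finset in
private lemma aux_sum4_factor {n : ℕ} (A B : Fin n → Fin n → ℝ) (v w : Fin n → ℝ)
    (c : Fin n → Fin n → ℝ) :
    (∑ p, ∑ q, ∑ s, ∑ t, A p q * B s t * (v q * w t * c p s))
    = ∑ p, (∑ q, A p q * v q) * ∑ s, ((∑ t, B s t * w t) * c p s) := by
  simp only [Finset.sum_mul, Finset.mul_sum]
  refine Finset.sum_congr rfl fun p _ => ?_
  conv_lhs => rw [Finset.sum_comm]
  refine Finset.sum_congr rfl fun s _ => ?_
  conv_lhs => rw [Finset.sum_comm]
  refine Finset.sum_congr rfl fun t _ => Finset.sum_congr rfl fun q _ => by ring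

open Finset in
private lemma aux_sum4_factor' {n : ℕ} (A B : Fin n → Fin n → ℝ) (v w : Fin n → ℝ)
    (c : Fin n → Fin n → ℝ) :
    (∑ p, ∑ q, ∑ s, ∑ t, A p q * B s t * (v p * w s * c q t))
    = ∑ q, (∑ p, A p q * v p) * ∑ t, ((∑ s, B s t * w s) * c q t) := by
  have h := aux_sum4_factor (fun x y => A y x) (fun x y => B y x) v w c
  conv_lhs => rw [Finset.sum_comm]
  calc (∑ q, ∑ p, ∑ s, ∑ t, A p q * B s t * (v p * w s * c q t))
      = ∑ q, ∑ p, ∑ t, ∑ s, A p q * B s t * (v p * w s * c q t) := by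
        refine Finset.sum_congr rfl fun q _ => Finset.sum_congr rfl fun p _ => ?_
        rw [Finset.sum_comm]
    _ = ∑ q, (∑ p, A p q * v p) * ∑ t, ((∑ s, B s t * w s) * c q t) := h

private lemma aux_deriv_comp_mul (f : ℝ → ℝ) (hf : Differentiable ℝ f) (α : ℝ) :
    deriv (fun β => f (α * β)) = fun β => α * deriv f (α * β) := by
  funext β
  have h : HasDerivAt (fun β => f (α * β)) (deriv f (α * β) * (α * 1)) β :=
    HasDerivAt.comp β (hf (α * β)).hasDerivAt ((hasDerivAt_id β).const_mul α)
  rw [h.deriv]; ring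

open Finset in
/-- Let `A = Fin n → ℝ` be a finite-dimensional associative unital algebra given by
structure constants `a`, with unit `u`, and let `π` be a smooth Poisson tensor
(in the linear coordinates) compatible with the multiplication, i.e.
`π (y*z) i j = Σ a p q i * a s t j * (z q * z t * π y p s + y p * y s * π z q t)`.
Then `π (t • y) = t ^ 2 • π y` for all `t, y`; in particular `π u = 0` and each
`π i j` is a homogeneous quadratic form. -/
theorem poisson_tensor_compatible_is_quadratic
    (n : ℕ) (a : Fin n → Fin n → Fin n → ℝ)
    (mul : (Fin n → ℝ) → (Fin n → ℝ) → (Fin n → ℝ))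
    (hmul : ∀ y z k, mul y z k = ∑ p, ∑ q, y p * z q * a p q k)
    (hassoc : ∀ y z w, mul (mul y z) w = mul y (mul z w))
    (u : Fin n → ℝ) (hul : ∀ y, mul u y = y) (hur : ∀ y, mul y u = y)
    (π : (Fin n → ℝ) → Fin n → Fin n → ℝ)
    (hsmooth : ∀ i j, ContDiff ℝ (⊤ : ℕ∞) (fun y => π y i j))
    (hcompat : ∀ y z i j, π (mul y z) i j =
      ∑ p, ∑ q, ∑ s, ∑ t, a p q i * a s t j *
        (z q * z t * π y p s + y p * y s * π z q t)) :
    (∀ (t : ℝ) (y : Fin n → ℝ) (i j : Fin n), π (t • y) i j = t ^ 2 * π y i j) ∧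
      (∀ i j, π u i j = 0) := by
  -- right-unit identity for structure constants
  have hR : ∀ p k, (∑ q, a p q k * u q) = if p = k then 1 else 0 := by
    intro p k
    have h := (hmul (Pi.single p 1) u k).symm.trans (congrFun (hur (Pi.single p 1)) k)
    simpa [Pi.single_apply, ite_mul, Finset.sum_ite_eq', mul_comm, eq_comm] using h
  -- left-unit identity for structure constants
  have hL : ∀ q k, (∑ p, a p q k * u p) = if q = k then 1 else 0 := by
    intro q k
    have h := (hmul u (Pi.single q 1) k).symm.trans (congrFun (hul (Pi.single q 1)) k)
    simpa [Pi.single_apply, ite_mul, mul_ite, Finset.sum_ite_eq', mul_comm, eq_comm] using h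
  -- collapse of the quadruple sum with the unit in the `z` slots
  have collapseR : ∀ (i j : Fin n) (β γ : ℝ) (c : Fin n → Fin n → ℝ),
      (∑ p, ∑ q, ∑ s, ∑ t, a p q i * a s t j * ((β * u q) * (γ * u t) * c p s))
        = β * γ * c i j := by
    intro i j β γ c
    rw [aux_sum4_factor]
    have h1 : ∀ p, (∑ q, a p q i * (β * u q)) = β * (if p = i then 1 else 0) := by
      intro p; rw [← hR p i, Finset.mul_sum]
      exact Finset.sum_congr rfl fun q _ => by ring
    have h2 : ∀ s, (∑ t, a s t j * (γ * u t)) = γ * (if s = j then 1 else 0) := by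
      intro s; rw [← hR s j, Finset.mul_sum]
      exact Finset.sum_congr rfl fun t _ => by ring
    simp only [h1, h2, mul_ite, ite_mul, mul_zero, zero_mul, mul_one, one_mul,
      Finset.sum_ite_eq', Finset.mem_univ, if_true]
    ring
  -- collapse of the quadruple sum with the unit in the `y` slots
  have collapseL : ∀ (i j : Fin n) (β γ : ℝ) (c : Fin n → Fin n → ℝ),
      (∑ p, ∑ q, ∑ s, ∑ t, a p q i * a s t j * ((β * u p) * (γ * u s) * c q t))
        = β * γ * c i j := by
    intro i j β γ c
    rw [aux_sum4_factor']
    have h1 : ∀ q, (∑ p, a p q i * (β * u p)) = β * (if q = i then 1 else 0) := by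
      intro q; rw [← hL q i, Finset.mul_sum]
      exact Finset.sum_congr rfl fun p _ => by ring
    have h2 : ∀ t, (∑ s, a s t j * (γ * u s)) = γ * (if t = j then 1 else 0) := by
      intro t; rw [← hL t j, Finset.mul_sum]
      exact Finset.sum_congr rfl fun s _ => by ring
    simp only [h1, h2, mul_ite, ite_mul, mul_zero, zero_mul, mul_one, one_mul,
      Finset.sum_ite_eq', Finset.mem_univ, if_true]
    ring
  -- scalar multiples of the unit multiply as scalars
  have hmul_smul_u : ∀ α β : ℝ, mul (α • u) (β • u) = (α * β) • u := by
    intro α β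
    funext k
    rw [hmul]
    have huu : u k = ∑ p, ∑ q, u p * u q * a p q k := by
      conv_lhs => rw [← hul u]
      exact hmul u u k
    simp only [Pi.smul_apply, smul_eq_mul]
    rw [huu, Finset.mul_sum]
    refine Finset.sum_congr rfl fun p _ => ?_
    rw [Finset.mul_sum]
    exact Finset.sum_congr rfl fun q _ => by ring
  -- the functional equation for f(t) = π (t • u) i j
  have key : ∀ (i j : Fin n) (α β : ℝ),
      π ((α * β) • u) i j = β ^ 2 * π (α • u) i j + α ^ 2 * π (β • u) i j := by
    intro i j α β
    rw [← hmul_smul_u, hcompat]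
    have split : (∑ p, ∑ q, ∑ s, ∑ t, a p q i * a s t j *
        ((β • u) q * (β • u) t * π (α • u) p s + (α • u) p * (α • u) s * π (β • u) q t))
        = (∑ p, ∑ q, ∑ s, ∑ t, a p q i * a s t j *
            ((β * u q) * (β * u t) * π (α • u) p s))
          + (∑ p, ∑ q, ∑ s, ∑ t, a p q i * a s t j *
            ((α * u p) * (α * u s) * π (β • u) q t)) := by
      rw [← Finset.sum_add_distrib]
      refine Finset.sum_congr rfl fun p _ => ?_
      rw [← Finset.sum_add_distrib]
      refine Finset.sum_congr rfl fun q _ => ?_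
      rw [← Finset.sum_add_distrib]
      refine Finset.sum_congr rfl fun s _ => ?_
      rw [← Finset.sum_add_distrib]
      refine Finset.sum_congr rfl fun t _ => ?_
      simp only [Pi.smul_apply, smul_eq_mul]
      ring
    rw [split, collapseR, collapseL]
    ring
  -- π vanishes on all scalar multiples of the unit
  have hzero : ∀ (α : ℝ) (i j : Fin n), π (α • u) i j = 0 := by
    intro α i j
    set f : ℝ → ℝ := fun t => π (t • u) i j with hfdef
    have hf : ContDiff ℝ (⊤ : ℕ∞) f :=
      (hsmooth i j).comp ((contDiff_id (E := ℝ)).smul contDiff_const)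
    have hfd : Differentiable ℝ f := hf.differentiable (by simp)
    have h2 : ContDiff ℝ (1 + 1) f := hf.of_le (WithTop.coe_le_coe.mpr le_top)
    have hfd' : Differentiable ℝ (deriv f) :=
      ((contDiff_succ_iff_deriv.mp h2).2.2).differentiable one_ne_zero
    have hfun : (fun β => f (α * β)) = fun β => β ^ 2 * f α + α ^ 2 * f β :=
      funext fun β => key i j α β
    -- second derivative at 0 of the left side
    have lhs2 : deriv (deriv (fun β => f (α * β))) 0 = α ^ 2 * deriv (deriv f) 0 := by
      rw [aux_deriv_comp_mul f hfd α]
      have : deriv (fun β => α * deriv f (α * β)) 0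
          = α * deriv (fun β => deriv f (α * β)) 0 := by
        rw [deriv_const_mul]
        exact (hfd' (α * 0)).comp 0 ((differentiable_id.const_mul α) 0)
      rw [this, aux_deriv_comp_mul (deriv f) hfd' α]
      simp [mul_zero]
      ring
    -- second derivative at 0 of the right side
    have rhs2 : deriv (deriv (fun β => β ^ 2 * f α + α ^ 2 * f β)) 0
        = 2 * f α + α ^ 2 * deriv (deriv f) 0 := by
      have hstep : deriv (fun β => β ^ 2 * f α + α ^ 2 * f β)
          = fun β => 2 * β * f α + α ^ 2 * deriv f β := by
        funext β
        rw [deriv_fun_add ((differentiable_pow 2).differentiableAt.mul_const (f α))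
          ((hfd β).const_mul (α ^ 2)), deriv_mul_const (differentiable_pow 2).differentiableAt,
          deriv_pow_field, deriv_const_mul _ (hfd β)]
        ring
      have h1 : HasDerivAt (fun β : ℝ => 2 * β * f α + α ^ 2 * deriv f β)
          (2 * 1 * f α + α ^ 2 * deriv (deriv f) 0) 0 := by
        exact (((hasDerivAt_id' (0 : ℝ)).const_mul 2).mul_const (f α)).add
          (((hfd' 0).hasDerivAt).const_mul (α ^ 2))
      rw [hstep, h1.deriv]
      ring
    have heq : α ^ 2 * deriv (deriv f) 0 = 2 * f α + α ^ 2 * deriv (deriv f) 0 :=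
      lhs2.symm.trans ((congrArg (fun g => deriv (deriv g) 0) hfun).trans rhs2)
    have : f α = 0 := by linarith
    simpa [hfdef] using this
  constructor
  · intro t y i j
    have hty : mul (t • u) y = t • y := by
      funext k
      rw [hmul]
      have hy : y k = ∑ p, ∑ q, u p * y q * a p q k := by
        conv_lhs => rw [← hul y]
        exact hmul u y k
      simp only [Pi.smul_apply, smul_eq_mul]
      rw [hy, Finset.mul_sum]
      refine Finset.sum_congr rfl fun p _ => ?_
      rw [Finset.mul_sum]
      exact Finset.sum_congr rfl fun q _ => by ring
    rw [← hty, hcompat]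
    have split : (∑ p, ∑ q, ∑ s, ∑ t', a p q i * a s t' j *
        (y q * y t' * π (t • u) p s + (t • u) p * (t • u) s * π y q t'))
        = (∑ p, ∑ q, ∑ s, ∑ t', a p q i * a s t' j *
            ((t * u p) * (t * u s) * π y q t')) := by
      refine Finset.sum_congr rfl fun p _ => Finset.sum_congr rfl fun q _ =>
        Finset.sum_congr rfl fun s _ => Finset.sum_congr rfl fun t' _ => ?_
      simp only [Pi.smul_apply, smul_eq_mul, hzero t p s]
      ring
    rw [split, collapseL]
    ring
  · intro i j
    have := hzero 1 i j
    simpa using this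
end

section
/- Let A be an associative unital algebra and for a ∈ A let S_a = u⊗u⊗a + u⊗a⊗u + a⊗u⊗u ∈ A⊗A⊗A, where u is the unit. Then for all a, b, c ∈ A: a⊗b⊗c + b⊗c⊗a + c⊗a⊗b + a⊗c⊗b + c⊗b⊗a + b⊗a⊗c = S_a S_b S_c − S_{ab} S_c − S_{ac} S_b − S_{bc} S_a + S_{acb} + S_{bca}. -/
open TensorProduct

/- `S a * S b * S c` places `a`, `b`, `c` in the three slots in all 27 ways; the six injective
placements form the left side, and the `S`-terms of degree two and one remove the collisions by
inclusion–exclusion. -/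
theorem sum_perm_tmul_eq_of_diagonal_sums {R A : Type*} [CommSemiring R] [Ring A] [Algebra R A]
    (S : A → A ⊗[R] (A ⊗[R] A))
    (hS : ∀ a : A, S a = (1 : A) ⊗ₜ[R] ((1 : A) ⊗ₜ[R] a)
      + (1 : A) ⊗ₜ[R] (a ⊗ₜ[R] (1 : A)) + a ⊗ₜ[R] ((1 : A) ⊗ₜ[R] (1 : A)))
    (a b c : A) :
    a ⊗ₜ[R] (b ⊗ₜ[R] c) + b ⊗ₜ[R] (c ⊗ₜ[R] a) + c ⊗ₜ[R] (a ⊗ₜ[R] b)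
        + a ⊗ₜ[R] (c ⊗ₜ[R] b) + c ⊗ₜ[R] (b ⊗ₜ[R] a) + b ⊗ₜ[R] (a ⊗ₜ[R] c)
      = S a * S b * S c - S (a * b) * S c - S (a * c) * S b - S (b * c) * S a
        + S (a * c * b) + S (b * c * a) := by
  simp only [hS, add_mul, mul_add, Algebra.TensorProduct.tmul_mul_tmul, one_mul, mul_one]
  abel

/-- In `A ⊗ A ⊗ A` with componentwise multiplication, with
`S a = 1⊗1⊗a + 1⊗a⊗1 + a⊗1⊗1`, for all `a b c : A` the symmetrization
`Σ_{σ ∈ S₃} a_{σ(1)} ⊗ a_{σ(2)} ⊗ a_{σ(3)}` equals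
`S a * S b * S c - S (a*b) * S c - S (a*c) * S b - S (b*c) * S a + S (a*c*b) + S (b*c*a)`. -/
theorem symmetrized_tensor_from_S_elements
    (A : Type*) [Ring A] [Algebra ℝ A]
    (S : A → A ⊗[ℝ] (A ⊗[ℝ] A))
    (hS : ∀ a : A, S a = (1 : A) ⊗ₜ[ℝ] ((1 : A) ⊗ₜ[ℝ] a)
      + (1 : A) ⊗ₜ[ℝ] (a ⊗ₜ[ℝ] (1 : A)) + a ⊗ₜ[ℝ] ((1 : A) ⊗ₜ[ℝ] (1 : A))) :
    ∀ a b c : A,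
      a ⊗ₜ[ℝ] (b ⊗ₜ[ℝ] c) + b ⊗ₜ[ℝ] (c ⊗ₜ[ℝ] a) + c ⊗ₜ[ℝ] (a ⊗ₜ[ℝ] b)
        + a ⊗ₜ[ℝ] (c ⊗ₜ[ℝ] b) + c ⊗ₜ[ℝ] (b ⊗ₜ[ℝ] a) + b ⊗ₜ[ℝ] (a ⊗ₜ[ℝ] c)
      = S a * S b * S c - S (a * b) * S c - S (a * c) * S b - S (b * c) * S a
        + S (a * c * b) + S (b * c * a) :=
  sum_perm_tmul_eq_of_diagonal_sums S hS
end

section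
/- Let A be an associative unital algebra and T ∈ A⊗A⊗A an element commuting with S_a = u⊗u⊗a + u⊗a⊗u + a⊗u⊗u for every a ∈ A. Then T commutes with every fully symmetric tensor X ∈ A⊗A⊗A (i.e. every X invariant under all permutations of the three tensor factors). -/
/-!
Write `S a = 1⊗1⊗a + 1⊗a⊗1 + a⊗1⊗1`. Expanding products of the `S`'s (inclusion–exclusion
over the slots that collide) shows that every symmetrized elementary tensor is a noncommutative
polynomial in the `S a`:
`Σ_σ a_σ(1)⊗a_σ(2)⊗a_σ(3) = S a S b S c - S(ab) S c - S(ac) S b - S(bc) S a + S(acb) + S(bca)`.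
Hence the symmetric tensors lie in the subalgebra generated by the `S a`, and anything commuting
with all `S a` commutes with that whole subalgebra.
-/

open TensorProduct

namespace TensorProduct

variable {R A : Type*} [CommRing R] [Ring A] [Algebra R A]

/-- The paper's `S_a`. -/
def primitive3 (a : A) : A ⊗[R] (A ⊗[R] A) :=
  (1 : A) ⊗ₜ ((1 : A) ⊗ₜ a) + (1 : A) ⊗ₜ (a ⊗ₜ (1 : A)) + a ⊗ₜ ((1 : A) ⊗ₜ (1 : A))

def symmetrize3 (a b c : A) : A ⊗[R] (A ⊗[R] A) :=
  a ⊗ₜ (b ⊗ₜ c) + b ⊗ₜ (c ⊗ₜ a) + c ⊗ₜ (a ⊗ₜ b)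
    + a ⊗ₜ (c ⊗ₜ b) + c ⊗ₜ (b ⊗ₜ a) + b ⊗ₜ (a ⊗ₜ c)

theorem symmetrize3_eq_primitive3_poly (a b c : A) :
    (symmetrize3 a b c : A ⊗[R] (A ⊗[R] A)) =
      primitive3 a * primitive3 b * primitive3 c - primitive3 (a * b) * primitive3 c
        - primitive3 (a * c) * primitive3 b - primitive3 (b * c) * primitive3 a
        + primitive3 (a * c * b) + primitive3 (b * c * a) := by
  simp only [symmetrize3, primitive3, mul_add, add_mul, Algebra.TensorProduct.tmul_mul_tmul,
    one_mul, mul_one]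
  abel

theorem symmetrize3_mem_adjoin_primitive3 (a b c : A) :
    (symmetrize3 a b c : A ⊗[R] (A ⊗[R] A)) ∈
      Algebra.adjoin R (Set.range (primitive3 : A → A ⊗[R] (A ⊗[R] A))) := by
  have gen (x : A) : (primitive3 x : A ⊗[R] (A ⊗[R] A)) ∈
      Algebra.adjoin R (Set.range primitive3) :=
    Algebra.subset_adjoin (Set.mem_range_self x)
  rw [symmetrize3_eq_primitive3_poly]
  refine add_mem (add_mem (sub_mem (sub_mem (sub_mem ?_ ?_) ?_) ?_) (gen _)) (gen _) <;>
    apply_rules [mul_mem]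

theorem span_symmetrize3_le_adjoin_primitive3 :
    Submodule.span R {Y : A ⊗[R] (A ⊗[R] A) | ∃ a b c : A, Y = symmetrize3 a b c} ≤
      Subalgebra.toSubmodule (Algebra.adjoin R (Set.range primitive3)) :=
  Submodule.span_le.mpr fun _ ⟨a, b, c, hY⟩ => hY ▸ symmetrize3_mem_adjoin_primitive3 a b c

theorem commute_of_mem_span_symmetrize3 {T X : A ⊗[R] (A ⊗[R] A)}
    (hT : ∀ a : A, Commute T (primitive3 a))
    (hX : X ∈ Submodule.span R {Y | ∃ a b c : A, Y = symmetrize3 a b c}) :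
    Commute T X := by
  have adjoin_le : Algebra.adjoin R (Set.range primitive3) ≤ Subalgebra.centralizer R {T} :=
    Algebra.adjoin_le <| Set.range_subset_iff.mpr fun a =>
      (Subalgebra.mem_centralizer_iff R).mpr fun _ hg => (Set.mem_singleton_iff.mp hg) ▸ hT a
  exact (Subalgebra.mem_centralizer_iff R).mp
    (adjoin_le (span_symmetrize3_le_adjoin_primitive3 hX)) T rfl

end TensorProduct

/-- If `T ∈ A ⊗ A ⊗ A` commutes with `S a = 1⊗1⊗a + 1⊗a⊗1 + a⊗1⊗1` for every
`a : A`, then `T` commutes with every fully symmetric tensor, i.e. every element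
of the span of the symmetrized elementary tensors. -/
theorem commutes_with_S_implies_commutes_with_symmetric
    (A : Type*) [Ring A] [Algebra ℝ A]
    (S : A → A ⊗[ℝ] (A ⊗[ℝ] A))
    (hS : ∀ a : A, S a = (1 : A) ⊗ₜ[ℝ] ((1 : A) ⊗ₜ[ℝ] a)
      + (1 : A) ⊗ₜ[ℝ] (a ⊗ₜ[ℝ] (1 : A)) + a ⊗ₜ[ℝ] ((1 : A) ⊗ₜ[ℝ] (1 : A)))
    (T : A ⊗[ℝ] (A ⊗[ℝ] A))
    (hT : ∀ a : A, T * S a = S a * T) :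
    ∀ X : A ⊗[ℝ] (A ⊗[ℝ] A),
      X ∈ Submodule.span ℝ {Y : A ⊗[ℝ] (A ⊗[ℝ] A) | ∃ a b c : A,
        Y = a ⊗ₜ[ℝ] (b ⊗ₜ[ℝ] c) + b ⊗ₜ[ℝ] (c ⊗ₜ[ℝ] a) + c ⊗ₜ[ℝ] (a ⊗ₜ[ℝ] b)
          + a ⊗ₜ[ℝ] (c ⊗ₜ[ℝ] b) + c ⊗ₜ[ℝ] (b ⊗ₜ[ℝ] a) + b ⊗ₜ[ℝ] (a ⊗ₜ[ℝ] c)} →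
      T * X = X * T := by
  obtain rfl : S = primitive3 := funext hS
  intro X hX
  exact commute_of_mem_span_symmetrize3 hT hX
end

section
/- Let A be an associative unital algebra and r ∈ A ⊗ A. With r^{12} = r⊗u, r^{23} = u⊗r, r^{13} the corresponding embeddings into A⊗A⊗A, define the Schouten bracket [[r,r]] = [r^{12},r^{13}] + [r^{12},r^{23}] + [r^{13},r^{23}]. Then ad_{[[r,r]]} = [[ad_r, ad_r]] as operators on A⊗A⊗A, where for an operator P on A⊗A, [[P,P]] = [P^{12},P^{13}] + [P^{12},P^{23}] + [P^{13},P^{23}]. -/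
/-!
Each of `P^{12}`, `P^{13}`, `P^{23}` is the inner derivation `ad` of the corresponding leg
`r^{12}`, `r^{13}`, `r^{23}`: the legs `12` and `23` because `ad` of `s ⊗ 1` (resp. `1 ⊗ s`)
only acts on the first two (resp. last two) factors, and the leg `13` because conjugating by the
flip of the last two factors is an algebra automorphism carrying `r^{12}` to `r^{13}`. Since `ad`
turns commutators in an associative algebra into commutators of operators, the operator bracket
`[[ad_r, ad_r]]` is `ad` of the Schouten element.
-/

open TensorProduct LieAlgebra

-- Not a global instance: it would change the `AddCommGroup` instance elaborated in the
-- statement of the theorem below.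
section

attribute [local instance] LieRing.ofAssociativeRing

variable {R A : Type*} [CommRing R] [Ring A] [Algebra R A]

theorem ad_mul_sub_mul {L : Type*} [Ring L] [Algebra R L] (u v : L) :
    ad R L (u * v - v * u) = ad R L u ∘ₗ ad R L v - ad R L v ∘ₗ ad R L u := by
  rw [← Ring.lie_def, LieHom.map_lie, Ring.lie_def, Module.End.mul_eq_comp,
    Module.End.mul_eq_comp]

def swapRightLegs : A ⊗[R] (A ⊗[R] A) ≃ₐ[R] A ⊗[R] (A ⊗[R] A) :=
  Algebra.TensorProduct.congr AlgEquiv.refl (Algebra.TensorProduct.comm R A A)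

@[simp]
theorem swapRightLegs_tmul (a b c : A) :
    swapRightLegs (a ⊗ₜ[R] (b ⊗ₜ[R] c)) = a ⊗ₜ (c ⊗ₜ b) :=
  rfl

theorem swapRightLegs_swapRightLegs (X : A ⊗[R] (A ⊗[R] A)) :
    swapRightLegs (swapRightLegs X) = X :=
  LinearMap.congr_fun
    (f := (swapRightLegs : A ⊗[R] (A ⊗[R] A) ≃ₐ[R] _).toLinearMap ∘ₗ swapRightLegs.toLinearMap)
    (g := LinearMap.id) (TensorProduct.ext_threefold' fun _ _ _ => rfl) X

theorem apply_eq_swapRightLegs {σ : A ⊗[R] (A ⊗[R] A) →ₗ[R] A ⊗[R] (A ⊗[R] A)}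
    (hσ : ∀ a b c : A, σ (a ⊗ₜ (b ⊗ₜ c)) = a ⊗ₜ (c ⊗ₜ b)) (X : A ⊗[R] (A ⊗[R] A)) :
    σ X = swapRightLegs X :=
  LinearMap.congr_fun (g := (swapRightLegs : A ⊗[R] (A ⊗[R] A) ≃ₐ[R] _).toLinearMap)
    (TensorProduct.ext_threefold' hσ) X

theorem map_ad_map_of_involutive {L : Type*} [Ring L] [Algebra R L] (φ : L ≃ₐ[R] L)
    (hφ : ∀ X, φ (φ X) = X) (u X : L) : φ (ad R L u (φ X)) = ad R L (φ u) X := by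
  rw [ad_apply, ad_apply, Ring.lie_def, Ring.lie_def, map_sub, map_mul, map_mul, hφ]

theorem assoc_mul_assoc (X Y : (A ⊗[R] A) ⊗[R] A) :
    TensorProduct.assoc R A A A X * TensorProduct.assoc R A A A Y =
      TensorProduct.assoc R A A A (X * Y) :=
  (map_mul (Algebra.TensorProduct.assoc R R R A A A) X Y).symm

section Legs

variable {e12 e13 e23 : A ⊗[R] A →ₗ[R] A ⊗[R] (A ⊗[R] A)}

theorem leg12_eq (he12 : ∀ a b : A, e12 (a ⊗ₜ b) = a ⊗ₜ (b ⊗ₜ (1 : A))) (s : A ⊗[R] A) :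
    e12 s = TensorProduct.assoc R A A A (s ⊗ₜ 1) := by
  induction s using TensorProduct.induction_on with
  | zero => simp only [map_zero, zero_tmul]
  | tmul a b => rw [he12, assoc_tmul]
  | add s t hs ht => rw [map_add, hs, ht, add_tmul, map_add]

theorem leg23_eq (he23 : ∀ a b : A, e23 (a ⊗ₜ b) = (1 : A) ⊗ₜ (a ⊗ₜ b)) (s : A ⊗[R] A) :
    e23 s = 1 ⊗ₜ s := by
  induction s using TensorProduct.induction_on with
  | zero => simp only [map_zero, tmul_zero]
  | tmul a b => rw [he23]
  | add s t hs ht => rw [map_add, hs, ht, tmul_add]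

theorem swapRightLegs_leg12 (he12 : ∀ a b : A, e12 (a ⊗ₜ b) = a ⊗ₜ (b ⊗ₜ (1 : A)))
    (he13 : ∀ a b : A, e13 (a ⊗ₜ b) = a ⊗ₜ ((1 : A) ⊗ₜ b)) (s : A ⊗[R] A) :
    swapRightLegs (e12 s) = e13 s := by
  induction s using TensorProduct.induction_on with
  | zero => simp only [map_zero]
  | tmul a b => rw [he12, he13, swapRightLegs_tmul]
  | add s t hs ht => rw [map_add, map_add, hs, ht, map_add]

variable {r : A ⊗[R] A} {P : A ⊗[R] A →ₗ[R] A ⊗[R] A}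
  {P12 P13 P23 : Module.End R (A ⊗[R] (A ⊗[R] A))}

theorem eq_ad_leg12 (he12 : ∀ a b : A, e12 (a ⊗ₜ b) = a ⊗ₜ (b ⊗ₜ (1 : A)))
    (hP : ∀ x, P x = r * x - x * r)
    (hP12 : ∀ (x : A ⊗[R] A) (c : A),
      P12 (TensorProduct.assoc R A A A (x ⊗ₜ c)) = TensorProduct.assoc R A A A (P x ⊗ₜ c)) :
    P12 = ad R _ (e12 r) := by
  refine LinearMap.ext fun X => ?_
  obtain ⟨Y, rfl⟩ := (TensorProduct.assoc R A A A).surjective X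
  induction Y using TensorProduct.induction_on with
  | zero => simp only [map_zero]
  | tmul x c =>
    rw [hP12, hP, ad_apply, Ring.lie_def, leg12_eq he12, assoc_mul_assoc, assoc_mul_assoc,
      ← map_sub, Algebra.TensorProduct.tmul_mul_tmul, Algebra.TensorProduct.tmul_mul_tmul,
      one_mul, mul_one, sub_tmul]
  | add Y Z hY hZ => simp only [map_add, hY, hZ]

theorem eq_ad_leg23 (he23 : ∀ a b : A, e23 (a ⊗ₜ b) = (1 : A) ⊗ₜ (a ⊗ₜ b))
    (hP : ∀ x, P x = r * x - x * r) (hP23 : ∀ (a : A) (y : A ⊗[R] A), P23 (a ⊗ₜ y) = a ⊗ₜ P y) :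
    P23 = ad R _ (e23 r) := by
  refine LinearMap.ext fun X => ?_
  induction X using TensorProduct.induction_on with
  | zero => simp only [map_zero]
  | tmul a y =>
    rw [hP23, hP, ad_apply, Ring.lie_def, leg23_eq he23, Algebra.TensorProduct.tmul_mul_tmul,
      Algebra.TensorProduct.tmul_mul_tmul, one_mul, mul_one, tmul_sub]
  | add X Y hX hY => simp only [map_add, hX, hY]

theorem eq_ad_leg13 {σ : A ⊗[R] (A ⊗[R] A) →ₗ[R] A ⊗[R] (A ⊗[R] A)}
    (he12 : ∀ a b : A, e12 (a ⊗ₜ b) = a ⊗ₜ (b ⊗ₜ (1 : A)))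
    (he13 : ∀ a b : A, e13 (a ⊗ₜ b) = a ⊗ₜ ((1 : A) ⊗ₜ b))
    (hσ : ∀ a b c : A, σ (a ⊗ₜ (b ⊗ₜ c)) = a ⊗ₜ (c ⊗ₜ b))
    (hP12 : P12 = ad R _ (e12 r)) (hP13 : ∀ X, P13 X = σ (P12 (σ X))) :
    P13 = ad R _ (e13 r) := by
  refine LinearMap.ext fun X => ?_
  rw [hP13, apply_eq_swapRightLegs hσ, apply_eq_swapRightLegs hσ, hP12,
    map_ad_map_of_involutive _ swapRightLegs_swapRightLegs, swapRightLegs_leg12 he12 he13]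

end Legs

end

/-- For `r ∈ A ⊗ A` with `r^{12}, r^{13}, r^{23} ∈ A ⊗ A ⊗ A` and the operator
`P = ad_r` on `A ⊗ A`, the adjoint action of the Schouten element
`[[r,r]] = [r^{12},r^{13}] + [r^{12},r^{23}] + [r^{13},r^{23}]` on `A ⊗ A ⊗ A`
equals the operator Schouten bracket `[P^{12},P^{13}] + [P^{12},P^{23}] + [P^{13},P^{23}]`. -/
theorem ad_schouten_eq_operator_schouten
    (A : Type*) [Ring A] [Algebra ℝ A]
    (r : A ⊗[ℝ] A)
    (e12 e13 e23 : A ⊗[ℝ] A →ₗ[ℝ] A ⊗[ℝ] (A ⊗[ℝ] A))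
    (he12 : ∀ a b : A, e12 (a ⊗ₜ b) = a ⊗ₜ (b ⊗ₜ (1 : A)))
    (he13 : ∀ a b : A, e13 (a ⊗ₜ b) = a ⊗ₜ ((1 : A) ⊗ₜ b))
    (he23 : ∀ a b : A, e23 (a ⊗ₜ b) = (1 : A) ⊗ₜ (a ⊗ₜ b))
    (P : A ⊗[ℝ] A →ₗ[ℝ] A ⊗[ℝ] A)
    (hP : ∀ x, P x = r * x - x * r)
    (σ : A ⊗[ℝ] (A ⊗[ℝ] A) →ₗ[ℝ] A ⊗[ℝ] (A ⊗[ℝ] A))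
    (hσ : ∀ a b c : A, σ (a ⊗ₜ (b ⊗ₜ c)) = a ⊗ₜ (c ⊗ₜ b))
    (P12 P13 P23 : A ⊗[ℝ] (A ⊗[ℝ] A) →ₗ[ℝ] A ⊗[ℝ] (A ⊗[ℝ] A))
    (hP12 : ∀ (x : A ⊗[ℝ] A) (c : A),
      P12 ((TensorProduct.assoc ℝ A A A) (x ⊗ₜ c)) =
        (TensorProduct.assoc ℝ A A A) ((P x) ⊗ₜ c))
    (hP23 : ∀ (a : A) (y : A ⊗[ℝ] A), P23 (a ⊗ₜ y) = a ⊗ₜ P y)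
    (hP13 : ∀ X, P13 X = σ (P12 (σ X))) :
    ∀ X : A ⊗[ℝ] (A ⊗[ℝ] A),
      ((e12 r * e13 r - e13 r * e12 r) + (e12 r * e23 r - e23 r * e12 r)
          + (e13 r * e23 r - e23 r * e13 r)) * X
        - X * ((e12 r * e13 r - e13 r * e12 r) + (e12 r * e23 r - e23 r * e12 r)
          + (e13 r * e23 r - e23 r * e13 r))
      = ((P12 ∘ₗ P13 - P13 ∘ₗ P12) + (P12 ∘ₗ P23 - P23 ∘ₗ P12)
          + (P13 ∘ₗ P23 - P23 ∘ₗ P13)) X := by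
  intro X
  rw [eq_ad_leg13 he12 he13 hσ (eq_ad_leg12 he12 hP hP12) hP13, eq_ad_leg12 he12 hP hP12,
    eq_ad_leg23 he23 hP hP23, ← ad_mul_sub_mul, ← ad_mul_sub_mul, ← ad_mul_sub_mul, ← map_add,
    ← map_add, ad_apply, Ring.lie_def]
end

section
/- Let a, b be elements of an associative unital algebra A with ab − ba = s·b for some scalar s. Then r = a⊗b − b⊗a satisfies the classical Yang–Baxter equation: [r^{12},r^{13}] + [r^{12},r^{23}] + [r^{13},r^{23}] = 0 in A⊗A⊗A. -/
/-!
Write `c = ⁅a, b⁆`. Expanding the three brackets leg by leg, the left-hand side of the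
classical Yang–Baxter equation for `r = a ⊗ b - b ⊗ a` is the full antisymmetrization of
`c ⊗ a ⊗ b`. When `c = s • b` this tensor has `b` in two slots, so its antisymmetrization vanishes.
-/

open TensorProduct

namespace ClassicalYangBaxter

section Alternation

variable (R : Type*) {M : Type*} [CommRing R] [AddCommGroup M] [Module R M]

def altTmul (x y z : M) : M ⊗[R] (M ⊗[R] M) :=
  x ⊗ₜ (y ⊗ₜ z) - x ⊗ₜ (z ⊗ₜ y) + y ⊗ₜ (z ⊗ₜ x) - y ⊗ₜ (x ⊗ₜ z)
    + z ⊗ₜ (x ⊗ₜ y) - z ⊗ₜ (y ⊗ₜ x)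

theorem altTmul_smul_left (s : R) (x y z : M) :
    altTmul R (s • x) y z = s • altTmul R x y z := by
  simp only [altTmul, smul_sub, smul_add, ← smul_tmul', tmul_smul]

theorem altTmul_self_left (x y : M) : altTmul R x y x = 0 := by
  simp only [altTmul]
  abel

end Alternation

section Legs

attribute [local instance] LieRing.ofAssociativeRing

variable (R : Type*) {A : Type*} [CommRing R] [Ring A] [Algebra R A]

/- `leg12 R x y`, `leg13 R x y`, `leg23 R x y` are the paper's `(x ⊗ y)^{12}`, `(x ⊗ y)^{13}`,
`(x ⊗ y)^{23}`: `x` and `y` in the indicated slots and `1` in the third. -/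
def leg12 (x y : A) : A ⊗[R] (A ⊗[R] A) := x ⊗ₜ (y ⊗ₜ 1)

def leg13 (x y : A) : A ⊗[R] (A ⊗[R] A) := x ⊗ₜ (1 ⊗ₜ y)

def leg23 (x y : A) : A ⊗[R] (A ⊗[R] A) := 1 ⊗ₜ (x ⊗ₜ y)

theorem lie_leg12_leg13 (x y z w : A) :
    ⁅leg12 R x y, leg13 R z w⁆ = ⁅x, z⁆ ⊗ₜ (y ⊗ₜ w) := by
  simp only [leg12, leg13, Ring.lie_def, Algebra.TensorProduct.tmul_mul_tmul, one_mul,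
    mul_one, sub_tmul]

theorem lie_leg12_leg23 (x y z w : A) :
    ⁅leg12 R x y, leg23 R z w⁆ = x ⊗ₜ (⁅y, z⁆ ⊗ₜ w) := by
  simp only [leg12, leg23, Ring.lie_def, Algebra.TensorProduct.tmul_mul_tmul, one_mul,
    mul_one, sub_tmul, tmul_sub]

theorem lie_leg13_leg23 (x y z w : A) :
    ⁅leg13 R x y, leg23 R z w⁆ = x ⊗ₜ (z ⊗ₜ ⁅y, w⁆) := by
  simp only [leg13, leg23, Ring.lie_def, Algebra.TensorProduct.tmul_mul_tmul, one_mul,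
    mul_one, tmul_sub]

theorem lie_legs_sum_eq_altTmul (a b : A) :
    ⁅leg12 R a b - leg12 R b a, leg13 R a b - leg13 R b a⁆
        + ⁅leg12 R a b - leg12 R b a, leg23 R a b - leg23 R b a⁆
        + ⁅leg13 R a b - leg13 R b a, leg23 R a b - leg23 R b a⁆
      = altTmul R ⁅a, b⁆ a b := by
  simp only [sub_lie, lie_sub, lie_leg12_leg13, lie_leg12_leg23, lie_leg13_leg23, lie_self,
    ← lie_skew b a, zero_tmul, tmul_zero, neg_tmul, tmul_neg, altTmul]
  abel

end Legs

end ClassicalYangBaxter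

open ClassicalYangBaxter

/-- If `a b : A` satisfy `a*b - b*a = s • b`, then `r = a ⊗ b - b ⊗ a` satisfies
the classical Yang–Baxter equation in `A ⊗ A ⊗ A`. -/
theorem rank_two_solvable_r_satisfies_cybe
    (A : Type*) [Ring A] [Algebra ℝ A]
    (a b : A) (s : ℝ) (hab : a * b - b * a = s • b)
    (e12 e13 e23 : A ⊗[ℝ] A →ₗ[ℝ] A ⊗[ℝ] (A ⊗[ℝ] A))
    (he12 : ∀ x y : A, e12 (x ⊗ₜ y) = x ⊗ₜ (y ⊗ₜ (1 : A)))
    (he13 : ∀ x y : A, e13 (x ⊗ₜ y) = x ⊗ₜ ((1 : A) ⊗ₜ y))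
    (he23 : ∀ x y : A, e23 (x ⊗ₜ y) = (1 : A) ⊗ₜ (x ⊗ₜ y))
    (r : A ⊗[ℝ] A) (hr : r = a ⊗ₜ b - b ⊗ₜ a) :
    (e12 r * e13 r - e13 r * e12 r) + (e12 r * e23 r - e23 r * e12 r)
      + (e13 r * e23 r - e23 r * e13 r) = 0 := by
  have h12 : e12 r = leg12 ℝ a b - leg12 ℝ b a := by simp only [hr, map_sub, he12, leg12]
  have h13 : e13 r = leg13 ℝ a b - leg13 ℝ b a := by simp only [hr, map_sub, he13, leg13]
  have h23 : e23 r = leg23 ℝ a b - leg23 ℝ b a := by simp only [hr, map_sub, he23, leg23]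
  rw [← Ring.lie_def] at hab
  simp only [← Ring.lie_def, h12, h13, h23, lie_legs_sum_eq_altTmul, hab, altTmul_smul_left,
    altTmul_self_left, smul_zero]
end

section
/- On the real quaternion algebra ℍ, the element r = a·(i∧j) + b·(i∧k) + c·(j∧k) ∈ ℍ ∧ ℍ (where x∧y = x⊗y − y⊗x) has Schouten bracket [[r,r]] = [r^{12},r^{13}] + [r^{12},r^{23}] + [r^{13},r^{23}] whose commutator with every tensor S_q = 1⊗1⊗q + 1⊗q⊗1 + q⊗1⊗1 (q ∈ ℍ) vanishes, for all real a, b, c. -/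
set_option synthInstance.maxHeartbeats 1000000
set_option maxHeartbeats 1000000
open TensorProduct Quaternion

noncomputable instance quatTensorThreeMul : Mul (ℍ[ℝ] ⊗[ℝ] (ℍ[ℝ] ⊗[ℝ] ℍ[ℝ])) :=
  @Algebra.TensorProduct.instMul ℝ ℍ[ℝ] (ℍ[ℝ] ⊗[ℝ] ℍ[ℝ]) _ _ _ _ _ _ _ _ _

/-!
The Schouten bracket evaluates to `[[r,r]] = 2(a² + b² + c²) · Alt(i ⊗ j ⊗ k)`, the totally
antisymmetric tensor of the imaginary units. Commuting a pure tensor with `S q` applies the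
derivation `⁅·, q⁆` to each tensor factor in turn, and `⁅·, q⁆` maps each imaginary unit into the
span of the other two, so every term it produces from `Alt(i ⊗ j ⊗ k)` has a repeated unit and
cancels by antisymmetry.
-/

section TripleTensor

variable (R : Type*) {A : Type*} [CommRing R] [Ring A] [Algebra R A]

def slotSum (q : A) : A ⊗[R] (A ⊗[R] A) :=
  1 ⊗ₜ (1 ⊗ₜ q) + 1 ⊗ₜ (q ⊗ₜ 1) + q ⊗ₜ (1 ⊗ₜ 1)

def antisymmTensor (x y z : A) : A ⊗[R] (A ⊗[R] A) :=
  x ⊗ₜ (y ⊗ₜ z) - x ⊗ₜ (z ⊗ₜ y) - y ⊗ₜ (x ⊗ₜ z)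
    + y ⊗ₜ (z ⊗ₜ x) + z ⊗ₜ (x ⊗ₜ y) - z ⊗ₜ (y ⊗ₜ x)

variable (A)

noncomputable def leg12 : A ⊗[R] A →ₗ[R] A ⊗[R] (A ⊗[R] A) :=
  TensorProduct.map LinearMap.id ((TensorProduct.mk R A A).flip 1)

noncomputable def leg13 : A ⊗[R] A →ₗ[R] A ⊗[R] (A ⊗[R] A) :=
  TensorProduct.map LinearMap.id (TensorProduct.mk R A A 1)

noncomputable def leg23 : A ⊗[R] A →ₗ[R] A ⊗[R] (A ⊗[R] A) :=
  TensorProduct.mk R A (A ⊗[R] A) 1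

variable {R A}

noncomputable def schoutenBracket (r : A ⊗[R] A) : A ⊗[R] (A ⊗[R] A) :=
  (leg12 R A r * leg13 R A r - leg13 R A r * leg12 R A r)
    + (leg12 R A r * leg23 R A r - leg23 R A r * leg12 R A r)
    + (leg13 R A r * leg23 R A r - leg23 R A r * leg13 R A r)

@[simp] lemma leg12_tmul (x y : A) : leg12 R A (x ⊗ₜ y) = x ⊗ₜ (y ⊗ₜ 1) := rfl
@[simp] lemma leg13_tmul (x y : A) : leg13 R A (x ⊗ₜ y) = x ⊗ₜ (1 ⊗ₜ y) := rfl
@[simp] lemma leg23_tmul (x y : A) : leg23 R A (x ⊗ₜ y) = 1 ⊗ₜ (x ⊗ₜ y) := rfl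

lemma tmul_tmul_mul_slotSum_sub (x y z q : A) :
    x ⊗ₜ[R] (y ⊗ₜ[R] z) * slotSum R q - slotSum R q * x ⊗ₜ[R] (y ⊗ₜ[R] z)
      = ⁅x, q⁆ ⊗ₜ (y ⊗ₜ z) + x ⊗ₜ (⁅y, q⁆ ⊗ₜ z) + x ⊗ₜ (y ⊗ₜ ⁅z, q⁆) := by
  simp only [slotSum, Ring.lie_def, mul_add, add_mul, Algebra.TensorProduct.tmul_mul_tmul,
    mul_one, one_mul, sub_tmul, tmul_sub]
  abel

lemma antisymmTensor_mul_slotSum_sub (x y z q : A) :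
    antisymmTensor R x y z * slotSum R q - slotSum R q * antisymmTensor R x y z
      = antisymmTensor R ⁅x, q⁆ y z + antisymmTensor R x ⁅y, q⁆ z
        + antisymmTensor R x y ⁅z, q⁆ := by
  let ad := LinearMap.mulRight R (slotSum R q) - LinearMap.mulLeft R (slotSum R q)
  have ad_tmul (x y z : A) : ad (x ⊗ₜ (y ⊗ₜ z)) = _ := tmul_tmul_mul_slotSum_sub x y z q
  change ad (antisymmTensor R x y z) = _
  simp only [antisymmTensor, map_add, map_sub, ad_tmul]
  abel

end TripleTensor

namespace QuaternionAlgebra.Basis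

variable {R A : Type*} [CommRing R] [Ring A] [Algebra R A] (B : Basis A (-1 : R) 0 (-1))

theorem schoutenBracket_eq (a b c : R) :
    schoutenBracket (a • (B.i ⊗ₜ[R] B.j - B.j ⊗ₜ B.i) + b • (B.i ⊗ₜ B.k - B.k ⊗ₜ B.i)
      + c • (B.j ⊗ₜ B.k - B.k ⊗ₜ B.j))
      = (2 * (a ^ 2 + b ^ 2 + c ^ 2)) • antisymmTensor R B.i B.j B.k := by
  simp only [schoutenBracket, antisymmTensor, map_add, map_sub, map_smul, leg12_tmul, leg13_tmul,
    leg23_tmul, mul_add, add_mul, mul_sub, sub_mul, smul_mul_assoc, mul_smul_comm,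
    Algebra.TensorProduct.tmul_mul_tmul, one_mul, mul_one, i_mul_i, j_mul_j, k_mul_k, i_mul_j,
    j_mul_i, i_mul_k, k_mul_i, j_mul_k, k_mul_j, zero_smul, add_zero, zero_add, zero_sub, neg_zero,
    neg_smul, one_smul, mul_neg, neg_neg, sub_neg_eq_add, tmul_neg, neg_tmul]
  module

theorem lie_i_lift (x : ℍ[R,-1,0,-1]) :
    ⁅B.i, B.lift x⁆ = (2 * x.imJ) • B.k - (2 * x.imK) • B.j := by
  simp only [lift, Ring.lie_def, mul_add, add_mul, Algebra.commutes, mul_smul_comm, smul_mul_assoc,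
    i_mul_i, i_mul_j, j_mul_i, i_mul_k, k_mul_i]
  module

theorem lie_j_lift (x : ℍ[R,-1,0,-1]) :
    ⁅B.j, B.lift x⁆ = (2 * x.imK) • B.i - (2 * x.imI) • B.k := by
  simp only [lift, Ring.lie_def, mul_add, add_mul, Algebra.commutes, mul_smul_comm, smul_mul_assoc,
    j_mul_j, i_mul_j, j_mul_i, j_mul_k, k_mul_j]
  module

theorem lie_k_lift (x : ℍ[R,-1,0,-1]) :
    ⁅B.k, B.lift x⁆ = (2 * x.imI) • B.j - (2 * x.imJ) • B.i := by
  simp only [lift, Ring.lie_def, mul_add, add_mul, Algebra.commutes, mul_smul_comm, smul_mul_assoc,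
    k_mul_k, i_mul_k, k_mul_i, j_mul_k, k_mul_j]
  module

theorem commute_antisymmTensor_slotSum (x : ℍ[R,-1,0,-1]) :
    Commute (antisymmTensor R B.i B.j B.k) (slotSum R (B.lift x)) := by
  refine sub_eq_zero.mp ?_
  rw [antisymmTensor_mul_slotSum_sub, lie_i_lift, lie_j_lift, lie_k_lift]
  simp only [antisymmTensor, tmul_sub, sub_tmul, tmul_smul, ← smul_tmul']
  module

end QuaternionAlgebra.Basis

/-- On the real quaternions, for any reals `a, b, c` the element
`r = a (i∧j) + b (i∧k) + c (j∧k) ∈ ℍ ∧ ℍ` has Schouten bracket `[[r,r]]` commuting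
with every tensor `S q = 1⊗1⊗q + 1⊗q⊗1 + q⊗1⊗1`, `q ∈ ℍ`. -/
theorem quaternion_r_schouten_ad_invariant
    (a b c : ℝ)
    (i j k : ℍ[ℝ]) (hi : i = ⟨0, 1, 0, 0⟩) (hj : j = ⟨0, 0, 1, 0⟩)
    (hk : k = ⟨0, 0, 0, 1⟩)
    (e12 e13 e23 : ℍ[ℝ] ⊗[ℝ] ℍ[ℝ] →ₗ[ℝ] ℍ[ℝ] ⊗[ℝ] (ℍ[ℝ] ⊗[ℝ] ℍ[ℝ]))
    (he12 : ∀ x y : ℍ[ℝ], e12 (x ⊗ₜ y) = x ⊗ₜ (y ⊗ₜ (1 : ℍ[ℝ])))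
    (he13 : ∀ x y : ℍ[ℝ], e13 (x ⊗ₜ y) = x ⊗ₜ ((1 : ℍ[ℝ]) ⊗ₜ y))
    (he23 : ∀ x y : ℍ[ℝ], e23 (x ⊗ₜ y) = (1 : ℍ[ℝ]) ⊗ₜ (x ⊗ₜ y))
    (r : ℍ[ℝ] ⊗[ℝ] ℍ[ℝ])
    (hr : r = a • (i ⊗ₜ j - j ⊗ₜ i) + b • (i ⊗ₜ k - k ⊗ₜ i) + c • (j ⊗ₜ k - k ⊗ₜ j))
    (S : ℍ[ℝ] → ℍ[ℝ] ⊗[ℝ] (ℍ[ℝ] ⊗[ℝ] ℍ[ℝ]))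
    (hS : ∀ q : ℍ[ℝ], S q = (1 : ℍ[ℝ]) ⊗ₜ ((1 : ℍ[ℝ]) ⊗ₜ q)
      + (1 : ℍ[ℝ]) ⊗ₜ (q ⊗ₜ (1 : ℍ[ℝ])) + q ⊗ₜ ((1 : ℍ[ℝ]) ⊗ₜ (1 : ℍ[ℝ]))) :
    ∀ q : ℍ[ℝ],
      ((e12 r * e13 r - e13 r * e12 r) + (e12 r * e23 r - e23 r * e12 r)
        + (e13 r * e23 r - e23 r * e13 r)) * S q
      = S q * ((e12 r * e13 r - e13 r * e12 r) + (e12 r * e23 r - e23 r * e12 r)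
        + (e13 r * e23 r - e23 r * e13 r)) := by
  intro q
  obtain rfl : e12 = leg12 ℝ ℍ[ℝ] := TensorProduct.ext' he12
  obtain rfl : e13 = leg13 ℝ ℍ[ℝ] := TensorProduct.ext' he13
  obtain rfl : e23 = leg23 ℝ ℍ[ℝ] := TensorProduct.ext' he23
  subst hi hj hk hr
  have hq : (QuaternionAlgebra.Basis.self ℝ).lift q = q := by
    ext <;> simp [QuaternionAlgebra.Basis.lift]
  have hcomm := ((QuaternionAlgebra.Basis.self ℝ).commute_antisymmTensor_slotSum q).smul_left
    (2 * (a ^ 2 + b ^ 2 + c ^ 2))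
  rw [← QuaternionAlgebra.Basis.schoutenBracket_eq, hq] at hcomm
  rw [hS]
  exact hcomm
end
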